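/- Let 0 < α ≤ 1, let s be a positive integer with s ≤ n, and let k > 0 be such that ks is a positive integer and a(s,ks;α) = (√(ks) − α)/(√s + α) > 1. Let x ∈ ℝⁿ be s-sparse and b = Ax. Suppose A ∈ ℝ^{m×n} has (ℓ₂,ℓ₁)-RIP constants of orders ks and (k+1)s satisfying δ_{ks}^{ub} + a(s,ks;α)·δ_{(k+1)s}^{lb} < a(s,ks;α) − 1. Then any x̂ ∈ ℝⁿ with A x̂ = b and ‖x̂‖₁ − α‖x̂‖₂ ≤ ‖x‖₁ − α‖x‖₂ must equal x; that is, x is the unique minimizer of ‖·‖₁ − α‖·‖₂ subject to Az = b. -/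

import Mathlib

open Finset

/-- The ℓ₁ norm of a vector in `ℝⁿ`. -/
noncomputable def l1norm {n : ℕ} (x : Fin n → ℝ) : ℝ := ∑ i, |x i|

/-- The ℓ₂ norm of a vector in `ℝⁿ`. -/
noncomputable def l2norm {n : ℕ} (x : Fin n → ℝ) : ℝ := Real.sqrt (∑ i, (x i) ^ 2)

/-- The restriction `x_S` of a vector `x` to an index set `S` (equal to `x` on `S`, zero
outside `S`). -/
def restr {n : ℕ} (x : Fin n → ℝ) (S : Finset (Fin n)) : Fin n → ℝ :=
  fun i => if i ∈ S then x i else 0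

/-- `T` is an index set of the `s` largest-magnitude entries of `x` among the indices in `S`. -/
def IsMaxIdxOn {n : ℕ} (x : Fin n → ℝ) (s : ℕ) (T S : Finset (Fin n)) : Prop :=
  T ⊆ S ∧ T.card = s ∧ ∀ i ∈ T, ∀ j ∈ S \ T, |x j| ≤ |x i|

/-- `T` is an index set of the `s` largest-magnitude entries of `x`. -/
def IsMaxIdx {n : ℕ} (x : Fin n → ℝ) (s : ℕ) (T : Finset (Fin n)) : Prop :=
  IsMaxIdxOn x s T Finset.univ

/-- A vector is `r`-sparse: it has at most `r` nonzero entries. -/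
def Sparse {n : ℕ} (r : ℕ) (v : Fin n → ℝ) : Prop :=
  ∃ S : Finset (Fin n), S.card ≤ r ∧ ∀ i ∉ S, v i = 0

/-!
Put `h = x̂ - x`, so `A h = 0`, and let `S ⊇ supp x` with `|S| ≤ s`. Minimality of `x̂` gives the
cone condition `‖h_{Sᶜ}‖₁ ≤ ‖h_S‖₁ + α‖h‖₂`. Let `T` index the `ks` largest entries of `h` off `S`
and `V = S ∪ T`. Every entry of `h_{Vᶜ}` is at most the mean of `|h|` over `T`; cutting `h_{Vᶜ}`
into successive blocks of `ks` largest entries and applying the upper RIP to each block gives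
`‖A h_{Vᶜ}‖₁ ≤ (1 + δ^{ub}) M` and also `‖h_{Vᶜ}‖₂ ≤ M`, where `M = ‖h_{Sᶜ}‖₁ / √ks`.
The lower RIP for `h_V`, with `A h_V = -A h_{Vᶜ}`, gives `(1 - δ^{lb}) ‖h_V‖₂ ≤ (1 + δ^{ub}) M`,
while the cone condition and Cauchy–Schwarz on `S` give `a M ≤ ‖h_V‖₂`. The condition
`δ^{ub} + a δ^{lb} < a - 1` makes these two incompatible unless `‖h_V‖₂ = M = 0`, i.e. `h = 0`.
When `Sᶜ` has at most `ks` elements, `h` is itself `(ks + s)`-sparse and the lower RIP suffices.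
-/

open scoped Matrix

section

variable {n : ℕ}

lemma l2norm_eq_norm_toLp (x : Fin n → ℝ) : l2norm x = ‖WithLp.toLp 2 x‖ := by
  simp [l2norm, EuclideanSpace.norm_eq]

lemma l2norm_nonneg (x : Fin n → ℝ) : 0 ≤ l2norm x := Real.sqrt_nonneg _

lemma l2norm_add_le (x y : Fin n → ℝ) : l2norm (x + y) ≤ l2norm x + l2norm y := by
  simpa only [l2norm_eq_norm_toLp, WithLp.toLp_add] using norm_add_le _ _

lemma eq_zero_of_l2norm_nonpos {x : Fin n → ℝ} (hx : l2norm x ≤ 0) : x = 0 := by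
  rw [l2norm_eq_norm_toLp] at hx
  simpa using norm_le_zero_iff.mp hx

lemma l2norm_sq_le_mul_l1norm {w : Fin n → ℝ} {θ : ℝ} (hw : ∀ i, |w i| ≤ θ) :
    l2norm w ^ 2 ≤ θ * l1norm w := by
  rw [l2norm, Real.sq_sqrt (by positivity), l1norm, mul_sum]
  refine sum_le_sum fun i _ => ?_
  rw [← sq_abs, sq]
  exact mul_le_mul_of_nonneg_right (hw i) (abs_nonneg _)

lemma l1norm_neg (x : Fin n → ℝ) : l1norm (-x) = l1norm x := by
  simp [l1norm]

lemma l1norm_add_le (x y : Fin n → ℝ) : l1norm (x + y) ≤ l1norm x + l1norm y := by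
  rw [l1norm, l1norm, l1norm, ← sum_add_distrib]
  exact sum_le_sum fun i _ => abs_add_le _ _

lemma restr_add_restr_compl (x : Fin n → ℝ) (S : Finset (Fin n)) :
    restr x S + restr x Sᶜ = x := by
  ext i
  by_cases hi : i ∈ S <;> simp [restr, hi]

lemma l1norm_restr (x : Fin n → ℝ) (S : Finset (Fin n)) :
    l1norm (restr x S) = ∑ i ∈ S, |x i| := by
  simp [l1norm, restr, apply_ite, sum_ite_mem]

lemma l2norm_restr (x : Fin n → ℝ) (S : Finset (Fin n)) :
    l2norm (restr x S) = √(∑ i ∈ S, x i ^ 2) := by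
  simp [l2norm, restr, sum_ite_mem]

lemma l2norm_restr_mono (x : Fin n → ℝ) {S T : Finset (Fin n)} (hST : S ⊆ T) :
    l2norm (restr x S) ≤ l2norm (restr x T) := by
  rw [l2norm_restr, l2norm_restr]
  exact Real.sqrt_le_sqrt (sum_le_sum_of_subset_of_nonneg hST fun i _ _ => sq_nonneg _)

lemma sum_abs_le_sqrt_card_mul_l2norm_restr (x : Fin n → ℝ) (S : Finset (Fin n)) :
    ∑ i ∈ S, |x i| ≤ √S.card * l2norm (restr x S) := by
  rw [l2norm_restr, ← Real.sqrt_mul (Nat.cast_nonneg _)]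
  refine Real.le_sqrt_of_sq_le ?_
  simpa only [sq_abs] using sq_sum_le_card_mul_sum_sq (s := S) (f := fun i => |x i|)

lemma sparse_restr (x : Fin n → ℝ) {S : Finset (Fin n)} {r : ℕ} (hS : S.card ≤ r) :
    Sparse r (restr x S) :=
  ⟨S, hS, fun _ hi => if_neg hi⟩

lemma l2norm_le_sqrt_card_mul {w : Fin n → ℝ} {U : Finset (Fin n)} {θ : ℝ} (hθ : 0 ≤ θ)
    (hU : ∀ i ∉ U, w i = 0) (hw : ∀ i, |w i| ≤ θ) : l2norm w ≤ √U.card * θ := by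
  have hwU : restr w U = w := by
    ext i; by_cases hi : i ∈ U <;> simp [restr, hi, hU]
  rw [← hwU, l2norm_restr, ← Real.sqrt_sq hθ, ← Real.sqrt_mul (Nat.cast_nonneg _)]
  refine Real.sqrt_le_sqrt ?_
  calc ∑ i ∈ U, w i ^ 2 ≤ ∑ _i ∈ U, θ ^ 2 :=
        sum_le_sum fun i _ => by simpa only [sq_abs] using pow_le_pow_left₀ (abs_nonneg _) (hw i) 2
    _ = U.card * θ ^ 2 := by rw [sum_const, nsmul_eq_mul]

lemma exists_isMaxIdxOn (x : Fin n → ℝ) {r : ℕ} {S : Finset (Fin n)} (hr : r ≤ S.card) :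
    ∃ T, IsMaxIdxOn x r T S := by
  obtain ⟨T, hT, hmax⟩ := exists_max_image (S.powersetCard r) (fun T => ∑ i ∈ T, |x i|)
    (powersetCard_nonempty.mpr hr)
  obtain ⟨hTS, hTcard⟩ := mem_powersetCard.mp hT
  refine ⟨T, hTS, hTcard, fun i hi j hj => ?_⟩
  obtain ⟨hjS, hjT⟩ := mem_sdiff.mp hj
  -- exchanging `i` for `j` must not increase the sum over `T`
  have hswap : insert j (T.erase i) ∈ S.powersetCard r := by
    refine mem_powersetCard.mpr ⟨insert_subset hjS ((erase_subset i T).trans hTS), ?_⟩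
    rw [card_insert_of_notMem fun h => hjT (mem_of_mem_erase h), card_erase_of_mem hi, hTcard]
    exact Nat.sub_add_cancel (hTcard ▸ card_pos.mpr ⟨i, hi⟩)
  have := hmax _ hswap
  rw [sum_insert fun h => hjT (mem_of_mem_erase h), sum_erase_eq_sub hi] at this
  linarith

lemma IsMaxIdxOn.card_mul_abs_le_sum {x : Fin n → ℝ} {r : ℕ} {T S : Finset (Fin n)}
    (hT : IsMaxIdxOn x r T S) {j : Fin n} (hj : j ∈ S \ T) : r * |x j| ≤ ∑ i ∈ T, |x i| := by
  calc r * |x j| = ∑ _i ∈ T, |x j| := by rw [sum_const, hT.2.1, nsmul_eq_mul]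
    _ ≤ ∑ i ∈ T, |x i| := sum_le_sum fun i hi => hT.2.2 i hi j hj

section UpperRIP

variable {m r : ℕ} (A : Matrix (Fin m) (Fin n) ℝ) {C : ℝ}

lemma l1norm_mulVec_le_of_support_card_le (hC : 0 ≤ C)
    (hRIP : ∀ v : Fin n → ℝ, Sparse r v → l1norm (A *ᵥ v) ≤ C * l2norm v)
    {w : Fin n → ℝ} {U : Finset (Fin n)} {θ : ℝ} (hθ : 0 ≤ θ) (hUr : U.card ≤ r)
    (hU : ∀ i ∉ U, w i = 0) (hw : ∀ i, |w i| ≤ θ) :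
    l1norm (A *ᵥ w) ≤ C * (√r * θ) := by
  calc l1norm (A *ᵥ w) ≤ C * l2norm w := hRIP w ⟨U, hUr, hU⟩
    _ ≤ C * (√U.card * θ) := by gcongr; exact l2norm_le_sqrt_card_mul hθ hU hw
    _ ≤ C * (√r * θ) := by gcongr

/-- Induction on the support: removing the `r` largest entries (indexed by `T`) leaves a vector
bounded entrywise by their mean `θ'`, and `√r θ' = ‖w_T‖₁ / √r`. -/
lemma l1norm_mulVec_le_of_abs_le (hr : 0 < r) (hC : 0 ≤ C)
    (hRIP : ∀ v : Fin n → ℝ, Sparse r v → l1norm (A *ᵥ v) ≤ C * l2norm v)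
    {w : Fin n → ℝ} {θ : ℝ} (hθ : 0 ≤ θ) (hw : ∀ i, |w i| ≤ θ) :
    l1norm (A *ᵥ w) ≤ C * (√r * θ + l1norm w / √r) := by
  have hsqrt : 0 < √(r : ℝ) := Real.sqrt_pos.mpr (by exact_mod_cast hr)
  suffices key : ∀ (U : Finset (Fin n)) (w : Fin n → ℝ) (θ : ℝ), 0 ≤ θ →
      (∀ i ∉ U, w i = 0) → (∀ i, |w i| ≤ θ) →
      l1norm (A *ᵥ w) ≤ C * (√r * θ + l1norm w / √r) from
    key univ w θ hθ (fun i hi => absurd (mem_univ i) hi) hw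
  intro U
  induction U using Finset.strongInduction with
  | H U ih =>
  intro w θ hθ hU hw
  rcases le_or_gt U.card r with hUr | hUr
  · have hl1 : 0 ≤ l1norm w / √r := div_nonneg (sum_nonneg fun i _ => abs_nonneg _) hsqrt.le
    calc l1norm (A *ᵥ w) ≤ C * (√r * θ) :=
          l1norm_mulVec_le_of_support_card_le A hC hRIP hθ hUr hU hw
      _ ≤ C * (√r * θ + l1norm w / √r) := by gcongr; linarith
  obtain ⟨T, hT⟩ := exists_isMaxIdxOn w hUr.le
  set θ' := (∑ i ∈ T, |w i|) / r
  have hθ' : 0 ≤ θ' := by positivity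
  have hTne : T.Nonempty := card_pos.mp (hT.2.1 ▸ hr)
  have hsub : U \ T ⊂ U := sdiff_ssubset hT.1 hTne
  have hrest_supp : ∀ i ∉ U \ T, restr w Tᶜ i = 0 := by
    intro i hi
    by_cases hiT : i ∈ T
    · simp [restr, hiT]
    · simp [restr, hiT, hU i fun hiU => hi (mem_sdiff.mpr ⟨hiU, hiT⟩)]
  have hrest_bound : ∀ i, |restr w Tᶜ i| ≤ θ' := by
    intro i
    by_cases hi : i ∈ U \ T
    · have := hT.card_mul_abs_le_sum hi
      rw [le_div_iff₀ (by exact_mod_cast hr)]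
      simpa [restr, (mem_sdiff.mp hi).2, mul_comm] using this
    · simpa [hrest_supp i hi] using hθ'
  have hhead : l1norm (A *ᵥ restr w T) ≤ C * (√r * θ) :=
    l1norm_mulVec_le_of_support_card_le A hC hRIP hθ hT.2.1.le (fun i hi => if_neg hi)
      fun i => by by_cases hi : i ∈ T <;> simp [restr, hi, hw i, hθ]
  have htail := ih _ hsub (restr w Tᶜ) θ' hθ' hrest_supp hrest_bound
  have hmean : √r * θ' = l1norm (restr w T) / √r := by
    rw [l1norm_restr, eq_div_iff hsqrt.ne', mul_right_comm,
      Real.mul_self_sqrt (Nat.cast_nonneg _)]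
    exact mul_div_cancel₀ _ (by exact_mod_cast hr.ne')
  calc l1norm (A *ᵥ w) = l1norm (A *ᵥ restr w T + A *ᵥ restr w Tᶜ) := by
        rw [← Matrix.mulVec_add, restr_add_restr_compl]
    _ ≤ l1norm (A *ᵥ restr w T) + l1norm (A *ᵥ restr w Tᶜ) := l1norm_add_le _ _
    _ ≤ C * (√r * θ) + C * (√r * θ' + l1norm (restr w Tᶜ) / √r) := add_le_add hhead htail
    _ = C * (√r * θ + (l1norm (restr w T) + l1norm (restr w Tᶜ)) / √r) := by
        rw [hmean]; ring
    _ = C * (√r * θ + l1norm w / √r) := by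
        rw [l1norm_restr, l1norm_restr, sum_add_sum_compl, l1norm]

end UpperRIP

namespace IsMaxIdxOn

variable {h : Fin n → ℝ} {r : ℕ} {S T : Finset (Fin n)}

lemma abs_restr_compl_union_le (hT : IsMaxIdxOn h r T Sᶜ) (hr : 0 < r) (i : Fin n) :
    |restr h (S ∪ T)ᶜ i| ≤ (∑ j ∈ T, |h j|) / r := by
  by_cases hi : i ∈ (S ∪ T)ᶜ
  · have hi' : i ∈ Sᶜ \ T := by simpa using hi
    rw [restr, if_pos hi, le_div_iff₀ (by exact_mod_cast hr), mul_comm]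
    exact hT.card_mul_abs_le_sum hi'
  · simp only [restr, hi, if_false, abs_zero]
    positivity

lemma sum_add_l1norm_restr_compl_union (hT : IsMaxIdxOn h r T Sᶜ) :
    ∑ j ∈ T, |h j| + l1norm (restr h (S ∪ T)ᶜ) = ∑ j ∈ Sᶜ, |h j| := by
  have hW : (S ∪ T)ᶜ = Sᶜ \ T := by ext; simp
  rw [l1norm_restr, hW, add_comm, sum_sdiff hT.1]

lemma l2norm_restr_compl_union_le (hT : IsMaxIdxOn h r T Sᶜ) (hr : 0 < r) :
    l2norm (restr h (S ∪ T)ᶜ) ≤ (∑ j ∈ Sᶜ, |h j|) / √r := by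
  have hsum := hT.sum_add_l1norm_restr_compl_union
  have hT0 : 0 ≤ ∑ j ∈ T, |h j| := sum_nonneg fun _ _ => abs_nonneg _
  have hW0 : 0 ≤ l1norm (restr h (S ∪ T)ᶜ) := sum_nonneg fun _ _ => abs_nonneg _
  refine abs_le_of_sq_le_sq' ?_ (by positivity) |>.2
  calc l2norm (restr h (S ∪ T)ᶜ) ^ 2
      ≤ (∑ j ∈ T, |h j|) / r * l1norm (restr h (S ∪ T)ᶜ) :=
        l2norm_sq_le_mul_l1norm (hT.abs_restr_compl_union_le hr)
    _ ≤ (∑ j ∈ Sᶜ, |h j|) / r * (∑ j ∈ Sᶜ, |h j|) :=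
        mul_le_mul (div_le_div_of_nonneg_right (by linarith) (Nat.cast_nonneg _)) (by linarith)
          hW0 (by positivity)
    _ = ((∑ j ∈ Sᶜ, |h j|) / √r) ^ 2 := by
        rw [div_pow, Real.sq_sqrt (Nat.cast_nonneg _)]; ring

lemma l1norm_mulVec_restr_compl_union_le {m : ℕ} (A : Matrix (Fin m) (Fin n) ℝ) {C : ℝ}
    (hT : IsMaxIdxOn h r T Sᶜ) (hr : 0 < r) (hC : 0 ≤ C)
    (hRIP : ∀ v : Fin n → ℝ, Sparse r v → l1norm (A *ᵥ v) ≤ C * l2norm v) :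
    l1norm (A *ᵥ restr h (S ∪ T)ᶜ) ≤ C * ((∑ j ∈ Sᶜ, |h j|) / √r) := by
  have hθ : 0 ≤ (∑ j ∈ T, |h j|) / r := by positivity
  convert l1norm_mulVec_le_of_abs_le A hr hC hRIP hθ (hT.abs_restr_compl_union_le hr) using 2
  rw [← hT.sum_add_l1norm_restr_compl_union]
  field_simp
  rw [Real.sq_sqrt (Nat.cast_nonneg _)]
  ring

end IsMaxIdxOn

lemma sum_compl_abs_le_of_l1norm_sub_l2norm_le {x h : Fin n → ℝ} {S : Finset (Fin n)} {α : ℝ}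
    (hα : 0 ≤ α) (hxS : ∀ i ∉ S, x i = 0)
    (hmin : l1norm (x + h) - α * l2norm (x + h) ≤ l1norm x - α * l2norm x) :
    ∑ i ∈ Sᶜ, |h i| ≤ ∑ i ∈ S, |h i| + α * l2norm h := by
  have hx : l1norm x = ∑ i ∈ S, |x i| := by
    rw [l1norm, ← sum_add_sum_compl S, add_eq_left]
    exact sum_eq_zero fun i hi => by simp [hxS i (mem_compl.mp hi)]
  have hxh : l1norm (x + h) = ∑ i ∈ S, |x i + h i| + ∑ i ∈ Sᶜ, |h i| := by
    rw [l1norm, ← sum_add_sum_compl S]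
    exact congrArg _ (sum_congr rfl fun i hi => by simp [hxS i (mem_compl.mp hi)])
  have hS : ∑ i ∈ S, |x i| - ∑ i ∈ S, |h i| ≤ ∑ i ∈ S, |x i + h i| := by
    rw [← sum_sub_distrib]
    exact sum_le_sum fun i _ => by simpa using abs_sub_abs_le_abs_sub (x i) (-h i)
  have hl2 : α * l2norm (x + h) ≤ α * (l2norm x + l2norm h) := by
    gcongr; exact l2norm_add_le x h
  linarith

lemma eq_zero_of_sparse_of_mulVec_eq_zero {m r : ℕ} {A : Matrix (Fin m) (Fin n) ℝ} {δ : ℝ}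
    (hδ : δ < 1) (hRIP : ∀ v : Fin n → ℝ, Sparse r v → (1 - δ) * l2norm v ≤ l1norm (A *ᵥ v))
    {h : Fin n → ℝ} (hh : Sparse r h) (hAh : A *ᵥ h = 0) : h = 0 := by
  have := hRIP h hh
  rw [hAh, l1norm, sum_eq_zero fun i _ => by simp] at this
  exact eq_zero_of_l2norm_nonpos (nonpos_of_mul_nonpos_right this (by linarith))

theorem eq_zero_of_mulVec_eq_zero_of_cone {m s r : ℕ} {A : Matrix (Fin m) (Fin n) ℝ}
    {α a δlb δub : ℝ} (hα : 0 < α) (hr : 0 < r)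
    (ha_def : a = (√r - α) / (√s + α)) (ha : 1 < a) (hδub : 0 ≤ δub)
    (hRIPlb : ∀ v : Fin n → ℝ, Sparse (r + s) v → (1 - δlb) * l2norm v ≤ l1norm (A *ᵥ v))
    (hRIPub : ∀ v : Fin n → ℝ, Sparse r v → l1norm (A *ᵥ v) ≤ (1 + δub) * l2norm v)
    (hcond : δub + a * δlb < a - 1)
    {S : Finset (Fin n)} (hS : S.card ≤ s) {h : Fin n → ℝ} (hAh : A *ᵥ h = 0)
    (hcone : ∑ i ∈ Sᶜ, |h i| ≤ ∑ i ∈ S, |h i| + α * l2norm h) : h = 0 := by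
  rcases le_or_gt Sᶜ.card r with hsmall | hlarge
  · refine eq_zero_of_sparse_of_mulVec_eq_zero (by nlinarith) hRIPlb
      ⟨univ, ?_, fun i hi => absurd (mem_univ i) hi⟩ hAh
    rw [card_univ, ← S.card_compl_add_card]
    omega
  obtain ⟨T, hT⟩ := exists_isMaxIdxOn h hlarge.le
  set V := S ∪ T
  set β := l2norm (restr h V)
  set M := (∑ i ∈ Sᶜ, |h i|) / √r
  have hsqrt : 0 < √(r : ℝ) := Real.sqrt_pos.mpr (by exact_mod_cast hr)
  have hsplit := restr_add_restr_compl h V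
  have hAV : A *ᵥ restr h V = -(A *ᵥ restr h Vᶜ) := by
    refine eq_neg_of_add_eq_zero_left ?_
    rw [← Matrix.mulVec_add, hsplit, hAh]
  have hlow : (1 - δlb) * β ≤ (1 + δub) * M :=
    calc (1 - δlb) * β ≤ l1norm (A *ᵥ restr h V) :=
          hRIPlb _ (sparse_restr h ((card_union_le S T).trans (by rw [hT.2.1]; omega)))
      _ = l1norm (A *ᵥ restr h Vᶜ) := by rw [hAV, l1norm_neg]
      _ ≤ (1 + δub) * M := hT.l1norm_mulVec_restr_compl_union_le A hr (by linarith) hRIPub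
  have hl2 : l2norm h ≤ β + M :=
    calc l2norm h = l2norm (restr h V + restr h Vᶜ) := by rw [hsplit]
      _ ≤ β + l2norm (restr h Vᶜ) := l2norm_add_le _ _
      _ ≤ β + M := by gcongr; exact hT.l2norm_restr_compl_union_le hr
  have hSβ : ∑ i ∈ S, |h i| ≤ √s * β :=
    calc ∑ i ∈ S, |h i| ≤ √S.card * l2norm (restr h S) :=
          sum_abs_le_sqrt_card_mul_l2norm_restr h S
      _ ≤ √s * β := by
        gcongr
        · exact l2norm_nonneg _
        · exact l2norm_restr_mono h subset_union_left
  -- the cone condition reads `√r M ≤ √s β + α (β + M)`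
  have haM : a * M ≤ β := by
    have hrM : √r * M = ∑ i ∈ Sᶜ, |h i| := mul_div_cancel₀ _ hsqrt.ne'
    have hα' : α * l2norm h ≤ α * (β + M) := by gcongr
    rw [ha_def, div_mul_eq_mul_div, div_le_iff₀ (by positivity)]
    nlinarith
  -- chaining `hlow` and `haM` gives `a (1 - δlb) β ≤ (1 + δub) β`, against `hcond`
  have hβ : β ≤ 0 := by
    refine nonpos_of_mul_nonpos_right (a := a - 1 - δub - a * δlb) ?_ (by linarith)
    nlinarith [mul_le_mul_of_nonneg_left hlow (by linarith : 0 ≤ a),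
      mul_le_mul_of_nonneg_left haM (by linarith : 0 ≤ 1 + δub)]
  have hM : M ≤ 0 := by nlinarith
  exact eq_zero_of_l2norm_nonpos (by linarith)

end

theorem stmt5_general {n m : ℕ} (α : ℝ) (hα0 : 0 < α)
    (s : ℕ)
    (ks : ℕ) (hks : 0 < ks)
    (a : ℝ) (ha_def : a = (Real.sqrt (ks : ℝ) - α) / (Real.sqrt s + α)) (ha : 1 < a)
    (A : Matrix (Fin m) (Fin n) ℝ) (δlb δub : ℝ) (hδub : 0 ≤ δub)
    (hRIPlb : ∀ v : Fin n → ℝ, Sparse (ks + s) v →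
      (1 - δlb) * l2norm v ≤ l1norm (A.mulVec v))
    (hRIPub : ∀ v : Fin n → ℝ, Sparse ks v →
      l1norm (A.mulVec v) ≤ (1 + δub) * l2norm v)
    (hcond : δub + a * δlb < a - 1)
    (x : Fin n → ℝ) (hx : Sparse s x) (b : Fin m → ℝ) (hb : b = A.mulVec x) :
    ∀ xhat : Fin n → ℝ, A.mulVec xhat = b →
      l1norm xhat - α * l2norm xhat ≤ l1norm x - α * l2norm x → xhat = x := by
  intro xhat hAxhat hmin
  obtain ⟨S, hS, hxS⟩ := hx
  have hAh : A *ᵥ (xhat - x) = 0 := by rw [Matrix.mulVec_sub, hAxhat, hb, sub_self]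
  rw [← add_sub_cancel x xhat] at hmin
  have hcone := sum_compl_abs_le_of_l1norm_sub_l2norm_le hα0.le hxS hmin
  exact sub_eq_zero.mp <|
    eq_zero_of_mulVec_eq_zero_of_cone hα0 hks ha_def ha hδub hRIPlb hRIPub hcond hS hAh hcone

/-- exact recovery via `ℓ₁ − αℓ₂` minimization.  Let `0 < α ≤ 1`,
`s ∈ [1, n]`, `k > 0` with `ks ∈ ℤ₊` and `a(s,ks;α) = (√(ks) − α)/(√s + α) > 1`.
If `A` has (ℓ₂,ℓ₁)-RIP constants of orders `ks` and `(k+1)s` satisfying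
`δ_{ks}^{ub} + a(s,ks;α)·δ_{(k+1)s}^{lb} < a(s,ks;α) − 1`, `x` is `s`-sparse and `b = Ax`,
then any `x̂` with `Ax̂ = b` and `‖x̂‖₁ − α‖x̂‖₂ ≤ ‖x‖₁ − α‖x‖₂` equals `x`. -/
theorem stmt5 {n m : ℕ} (α : ℝ) (hα0 : 0 < α) (hα1 : α ≤ 1)
    (s : ℕ) (hs : 0 < s) (hsn : s ≤ n)
    (k : ℝ) (hk : 0 < k) (ks : ℕ) (hks : 0 < ks) (hksk : (ks : ℝ) = k * s)
    (a : ℝ) (ha_def : a = (Real.sqrt (ks : ℝ) - α) / (Real.sqrt s + α)) (ha : 1 < a)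
    (A : Matrix (Fin m) (Fin n) ℝ) (δlb δub : ℝ) (hδlb : 0 ≤ δlb) (hδub : 0 ≤ δub)
    (hRIPlb : ∀ v : Fin n → ℝ, Sparse (ks + s) v →
      (1 - δlb) * l2norm v ≤ l1norm (A.mulVec v))
    (hRIPub : ∀ v : Fin n → ℝ, Sparse ks v →
      l1norm (A.mulVec v) ≤ (1 + δub) * l2norm v)
    (hcond : δub + a * δlb < a - 1)
    (x : Fin n → ℝ) (hx : Sparse s x) (b : Fin m → ℝ) (hb : b = A.mulVec x) :
    ∀ xhat : Fin n → ℝ, A.mulVec xhat = b →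
      l1norm xhat - α * l2norm xhat ≤ l1norm x - α * l2norm x → xhat = x :=
  stmt5_general α hα0 s ks hks a ha_def ha A δlb δub hδub hRIPlb hRIPub hcond x hx b hb
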